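/- Let Q₈ = QuaternionGroup 2 be the quaternion group of order 8, with elements a i (i : ZMod 4) and xa i. Let I = Subgroup.zpowers (a 1), J = Subgroup.zpowers (xa 0), K = Subgroup.zpowers (xa 1) be its three cyclic subgroups of order 4, and let Z be the subgroup of I generated by the element corresponding to a 2 (so Z maps onto the center of Q₈, of order 2). Let X = I/Z be the coset I-set. Consider the coinduced Q₈-set Coind_I^{Q₈} X = {f : Q₈ → X | f(h·g) = h·f(g) for all h ∈ I, g ∈ Q₈} with Q₈-action (g·f)(g') = f(g'·g). Then there is a Q₈-equivariant bijection from Coind_I^{Q₈} X to the disjoint union Q₈/J ⊔ Q₈/K of coset Q₈-sets. -/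

import Mathlib

open QuaternionGroup

/-- The coinduced `G`-set of an `H`-set `X` (where the `H`-action on `X` is given by
`sm`): the set of functions `f : G → X` with `f (h * g) = h • f g` for all `h ∈ H`,
`g ∈ G`. -/
structure CoindSet (G : Type*) [Group G] (H : Subgroup G) (X : Type*)
    (sm : H → X → X) where
  toFun : G → X
  compat : ∀ (h : H) (g : G), toFun (↑h * g) = sm h (toFun g)

/-- The `G`-action on the coinduced set: `(g • f) g' = f (g' * g)`. -/
def coindAct {G : Type*} [Group G] {H : Subgroup G} {X : Type*} {sm : H → X → X}
    (g : G) (f : CoindSet G H X sm) : CoindSet G H X sm where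
  toFun := fun g' => f.toFun (g' * g)
  compat := by
    intro h g'
    show f.toFun (↑h * g' * g) = sm h (f.toFun (g' * g))
    rw [mul_assoc]
    exact f.compat h (g' * g)

/-- The cyclic subgroup `I = ⟨a 1⟩` of order 4 in `Q₈`. -/
def I : Subgroup (QuaternionGroup 2) := Subgroup.zpowers (a 1)

/-- The cyclic subgroup `J = ⟨xa 0⟩` of order 4 in `Q₈`. -/
def J : Subgroup (QuaternionGroup 2) := Subgroup.zpowers (xa 0)

/-- The cyclic subgroup `K = ⟨xa 1⟩` of order 4 in `Q₈`. -/
def K : Subgroup (QuaternionGroup 2) := Subgroup.zpowers (xa 1)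

lemma a2_mem_I : (a 2 : QuaternionGroup 2) ∈ I := by
  have h : (a 1 : QuaternionGroup 2) ^ (2 : ℕ) = a 2 := by
    rw [a_one_pow]
    norm_num
  exact h ▸ pow_mem (Subgroup.mem_zpowers _) 2

/-- The subgroup `Z` of `I` generated by the element corresponding to `a 2`; it maps
onto the center of `Q₈`, of order 2. -/
def Z : Subgroup I := Subgroup.zpowers (⟨a 2, a2_mem_I⟩ : I)

/-! The three sign characters of `Q₈` with kernels `I`, `J`, `K` identify `I \ Q₈`, `I ⧸ Z`,
`Q₈ ⧸ J` and `Q₈ ⧸ K` with `ℤˣ`. An element of the coinduced set is then a function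
`φ : ℤˣ → ℤˣ` (its values on coset representatives), on which `g` acts by
`φ ↦ signJ g * φ (· * signI g)`. The constant functions form one orbit, a copy of `Q₈ ⧸ J`;
the functions `t ↦ t * c` form the other, on which `g` acts through `signI g * signJ g`,
the character with kernel `K`. -/

local notation "Q₈" => QuaternionGroup 2

section QuotientEquiv

variable {G A : Type*} [Group G] [Group A] (χ : G →* A) {H : Subgroup G}

noncomputable def quotientEquivOfKerEq (hχ : Function.Surjective χ) (hH : χ.ker = H) :
    G ⧸ H ≃ A :=
  Equiv.ofBijective
    (Quotient.lift χ fun x y hxy => by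
      rw [← inv_mul_eq_one, ← map_inv, ← map_mul, ← MonoidHom.mem_ker, hH]
      exact QuotientGroup.leftRel_apply.mp hxy)
    ⟨fun p q => Quotient.inductionOn₂' p q fun x y hxy => by
        rw [QuotientGroup.eq, ← hH, MonoidHom.mem_ker, map_mul, map_inv, inv_mul_eq_one]
        exact hxy,
      fun y => let ⟨g, hg⟩ := hχ y; ⟨g, hg⟩⟩

variable {χ} (hχ : Function.Surjective χ) (hH : χ.ker = H)

lemma quotientEquivOfKerEq_smul (g : G) (q : G ⧸ H) :
    quotientEquivOfKerEq χ hχ hH (g • q) = χ g * quotientEquivOfKerEq χ hχ hH q :=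
  QuotientGroup.induction_on q fun y => map_mul χ g y

lemma quotientEquivOfKerEq_symm_mul (g : G) (y : A) :
    (quotientEquivOfKerEq χ hχ hH).symm (χ g * y) =
      g • (quotientEquivOfKerEq χ hχ hH).symm y := by
  rw [Equiv.symm_apply_eq, quotientEquivOfKerEq_smul, Equiv.apply_symm_apply]

end QuotientEquiv

lemma MonoidHom.surjective_of_map_eq_neg_one {G : Type*} [Group G] (χ : G →* ℤˣ) {g : G}
    (hg : χ g = -1) : Function.Surjective χ := fun u => by
  rcases Int.units_eq_one_or u with rfl | rfl
  exacts [⟨1, map_one χ⟩, ⟨g, hg⟩]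

def signI : Q₈ →* ℤˣ where
  toFun
    | a _ => 1
    | xa _ => -1
  map_one' := rfl
  map_mul' := by decide

def signJ : Q₈ →* ℤˣ where
  toFun
    | a i => (-1) ^ i.val
    | xa i => (-1) ^ i.val
  map_one' := rfl
  map_mul' := by decide

def signK : Q₈ →* ℤˣ := signI * signJ

lemma ker_signI : signI.ker = I := by
  ext g
  rw [I, MonoidHom.mem_ker, mem_zpowers_iff_mem_range_orderOf, orderOf_a_one]
  revert g; decide

lemma ker_signJ : signJ.ker = J := by
  ext g
  rw [J, MonoidHom.mem_ker, mem_zpowers_iff_mem_range_orderOf, orderOf_xa]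
  revert g; decide

lemma ker_signK : signK.ker = K := by
  ext g
  rw [K, MonoidHom.mem_ker, mem_zpowers_iff_mem_range_orderOf, orderOf_xa]
  revert g; decide

lemma ker_signJ_domRestrict : (signJ.domRestrict I).ker = Z := by
  ext ⟨g, hg⟩
  have h2 : orderOf (a 2 : Q₈) = 2 := by rw [orderOf_a]; rfl
  rw [Z, MonoidHom.mem_ker, MonoidHom.domRestrict_apply, mem_zpowers_iff_mem_range_orderOf,
    Subgroup.orderOf_mk, h2]
  simp only [Finset.mem_image, Subtype.ext_iff, SubgroupClass.coe_pow]
  rw [← ker_signI] at hg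
  revert g; decide

noncomputable def quotientZEquiv : I ⧸ Z ≃ ℤˣ :=
  quotientEquivOfKerEq (signJ.domRestrict I)
    ((signJ.domRestrict I).surjective_of_map_eq_neg_one
      (g := ⟨a 1, Subgroup.mem_zpowers _⟩) rfl)
    ker_signJ_domRestrict

lemma quotientZEquiv_smul (h : I) (x : I ⧸ Z) :
    quotientZEquiv (h • x) = signJ h * quotientZEquiv x :=
  quotientEquivOfKerEq_smul _ _ h x

lemma quotientZEquiv_symm_mul (h : I) (u : ℤˣ) :
    quotientZEquiv.symm (signJ h * u) = h • quotientZEquiv.symm u :=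
  quotientEquivOfKerEq_symm_mul _ _ h u

def cosetRep (t : ℤˣ) : Q₈ := if t = 1 then 1 else xa 0

lemma signI_cosetRep (t : ℤˣ) : signI (cosetRep t) = t := by revert t; decide

lemma signJ_cosetRep (t : ℤˣ) : signJ (cosetRep t) = 1 := by revert t; decide

abbrev CoindIZ : Type := CoindSet Q₈ I (I ⧸ Z) (fun h x => h • x)

attribute [ext] CoindSet

lemma quotientZEquiv_apply (f : CoindIZ) (g : Q₈) :
    quotientZEquiv (f.toFun g) = signJ g * quotientZEquiv (f.toFun (cosetRep (signI g))) := by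
  set r := cosetRep (signI g)
  have hr : g * r⁻¹ ∈ I := by
    rw [← ker_signI, MonoidHom.mem_ker, map_mul, map_inv, signI_cosetRep, mul_inv_cancel]
  have := f.compat ⟨g * r⁻¹, hr⟩ r
  rw [inv_mul_cancel_right] at this
  rw [this, quotientZEquiv_smul, map_mul, map_inv, signJ_cosetRep, inv_one, mul_one]

noncomputable def coindEquiv : CoindIZ ≃ (ℤˣ → ℤˣ) where
  toFun f t := quotientZEquiv (f.toFun (cosetRep t))
  invFun φ :=
    { toFun g := quotientZEquiv.symm (signJ g * φ (signI g))
      compat h g := by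
        have hh : signI h = 1 := by rw [← MonoidHom.mem_ker, ker_signI]; exact h.2
        rw [signJ.map_mul, signI.map_mul, hh, one_mul, mul_assoc, quotientZEquiv_symm_mul] }
  left_inv f := CoindSet.ext <| funext fun g =>
    quotientZEquiv.symm_apply_eq.mpr (quotientZEquiv_apply f g).symm
  right_inv φ := funext fun t => by
    simp only [Equiv.apply_symm_apply, signI_cosetRep, signJ_cosetRep, one_mul]

lemma coindEquiv_coindAct (g : Q₈) (f : CoindIZ) :
    coindEquiv (coindAct g f) = fun t => signJ g * coindEquiv f (t * signI g) := by
  funext t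
  change quotientZEquiv (f.toFun (cosetRep t * g)) = _
  rw [quotientZEquiv_apply, map_mul, map_mul, signJ_cosetRep, signI_cosetRep, one_mul]
  rfl

def splitEquiv : (ℤˣ → ℤˣ) ≃ ℤˣ ⊕ ℤˣ where
  toFun φ := if φ (-1) = φ 1 then .inl (φ 1) else .inr (φ 1)
  invFun := Sum.elim (fun c _ => c) (fun c t => t * c)
  left_inv φ := by
    by_cases h : φ (-1) = φ 1
    · funext t
      rcases Int.units_eq_one_or t with rfl | rfl <;> simp [h]
    · have h' := Int.units_ne_iff_eq_neg.mp h
      funext t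
      rcases Int.units_eq_one_or t with rfl | rfl <;> simp [h']
  right_inv := by
    rintro (c | c)
    · simp
    · have : -c ≠ c := by revert c; decide
      simp [this]

lemma splitEquiv_twist (s u : ℤˣ) (φ : ℤˣ → ℤˣ) :
    splitEquiv (fun t => s * φ (t * u)) = Sum.map (s * ·) (u * s * ·) (splitEquiv φ) := by
  obtain ⟨x, rfl⟩ := splitEquiv.symm.surjective φ
  rw [Equiv.apply_symm_apply]
  revert s u x
  decide

/-- The coinduction to `Q₈` of the coset `I`-set `I ⧸ Z` is `Q₈`-equivariantly
bijective to the disjoint union `Q₈ ⧸ J ⊔ Q₈ ⧸ K` of coset `Q₈`-sets. -/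
theorem stmt11 :
    ∃ e : CoindSet (QuaternionGroup 2) I (I ⧸ Z) (fun h x => h • x) ≃
        ((QuaternionGroup 2 ⧸ J) ⊕ (QuaternionGroup 2 ⧸ K)),
      ∀ (g : QuaternionGroup 2)
        (f : CoindSet (QuaternionGroup 2) I (I ⧸ Z) (fun h x => h • x)),
        e (coindAct g f) = Sum.map (fun x => g • x) (fun x => g • x) (e f) := by
  let eJ := quotientEquivOfKerEq signJ
    (signJ.surjective_of_map_eq_neg_one (g := a 1) rfl) ker_signJ
  let eK := quotientEquivOfKerEq signK
    (signK.surjective_of_map_eq_neg_one (g := a 1) rfl) ker_signK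
  refine ⟨coindEquiv.trans (splitEquiv.trans (eJ.symm.sumCongr eK.symm)), fun g f => ?_⟩
  simp only [Equiv.trans_apply, coindEquiv_coindAct, splitEquiv_twist]
  rcases splitEquiv (coindEquiv f) with c | c
  · exact congrArg Sum.inl (quotientEquivOfKerEq_symm_mul _ _ g c)
  · exact congrArg Sum.inr (quotientEquivOfKerEq_symm_mul _ _ g c)
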